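/- Let Z be a nonempty finite type, let π : Z → ℝ be a probability mass function (the prior P(z)), let q : Z → ℝ be a probability mass function (the approximate posterior Q(z|x)), let r : Z → ℝ satisfy r z > 0 for all z (the conditional likelihood P(x|z)), and let g : Z → ℝ satisfy g z > 0 for all z (the conditional tree probability P(T|z)). Then log ((∑ z, π z * r z) * (∑ z, q z * g z)) ≥ (∑ z, q z * log (r z)) - KL(q‖π) + (∑ z, q z * log (g z)). (This is the full LAP lemma for a labeled example: the objective J = log(P(x) · P(T|x)) is bounded below by the LAP evidence lower bound J_lap.) -/

import Mathlib

/-!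
Both factors are handled by Jensen's inequality for the concave logarithm under the weights `q`:
`∑ q log g ≤ log ∑ q g` bounds `log P(T|x)` directly, and applied to `π r / q` it gives the
usual evidence lower bound `∑ q log r - KL(q‖π) ≤ log ∑ π r` for `log P(x)`.
-/

open Finset

theorem sum_mul_log_le_log_sum_mul {ι : Type*} (s : Finset ι) (w p : ι → ℝ)
    (hw : ∀ i ∈ s, 0 ≤ w i) (hwsum : ∑ i ∈ s, w i = 1) (hp : ∀ i ∈ s, 0 < p i) :
    ∑ i ∈ s, w i * Real.log (p i) ≤ Real.log (∑ i ∈ s, w i * p i) :=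
  strictConcaveOn_log_Ioi.concaveOn.le_map_sum hw hwsum hp

theorem sum_mul_log_sub_sum_mul_log_div_le_log_sum {ι : Type*} (s : Finset ι) (π q r : ι → ℝ)
    (hπ : ∀ i ∈ s, 0 < π i) (hq : ∀ i ∈ s, 0 < q i) (hqsum : ∑ i ∈ s, q i = 1)
    (hr : ∀ i ∈ s, 0 < r i) :
    ∑ i ∈ s, q i * Real.log (r i) - ∑ i ∈ s, q i * Real.log (q i / π i)
      ≤ Real.log (∑ i ∈ s, π i * r i) := by
  have hjensen := sum_mul_log_le_log_sum_mul s q (fun i => π i * r i / q i)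
    (fun i hi => (hq i hi).le) hqsum
    (fun i hi => div_pos (mul_pos (hπ i hi) (hr i hi)) (hq i hi))
  calc ∑ i ∈ s, q i * Real.log (r i) - ∑ i ∈ s, q i * Real.log (q i / π i)
      = ∑ i ∈ s, q i * Real.log (π i * r i / q i) := by
        rw [← sum_sub_distrib]
        refine sum_congr rfl fun i hi => ?_
        have hπi := (hπ i hi).ne'
        have hqi := (hq i hi).ne'
        rw [Real.log_div (mul_ne_zero hπi (hr i hi).ne') hqi, Real.log_mul hπi (hr i hi).ne',
          Real.log_div hqi hπi]
        ring
    _ ≤ Real.log (∑ i ∈ s, q i * (π i * r i / q i)) := hjensen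
    _ = Real.log (∑ i ∈ s, π i * r i) := by
        congr 1
        exact sum_congr rfl fun i hi => mul_div_cancel₀ _ (hq i hi).ne'

theorem lap_elbo_full_general {Z : Type*} [Fintype Z] [Nonempty Z]
    (π q r g : Z → ℝ)
    (hπpos : ∀ z, 0 < π z)
    (hqpos : ∀ z, 0 < q z) (hqsum : ∑ z, q z = 1)
    (hrpos : ∀ z, 0 < r z) (hgpos : ∀ z, 0 < g z) :
    (∑ z, q z * Real.log (r z)) - (∑ z, q z * Real.log (q z / π z))
        + (∑ z, q z * Real.log (g z))
      ≤ Real.log ((∑ z, π z * r z) * (∑ z, q z * g z)) := by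
  have hmarginal : 0 < ∑ z, π z * r z :=
    sum_pos (fun z _ => mul_pos (hπpos z) (hrpos z)) univ_nonempty
  have htree : 0 < ∑ z, q z * g z :=
    sum_pos (fun z _ => mul_pos (hqpos z) (hgpos z)) univ_nonempty
  rw [Real.log_mul hmarginal.ne' htree.ne']
  gcongr ?_ + ?_
  · exact sum_mul_log_sub_sum_mul_log_div_le_log_sum univ π q r (fun z _ => hπpos z)
      (fun z _ => hqpos z) hqsum (fun z _ => hrpos z)
  · exact sum_mul_log_le_log_sum_mul univ q g (fun z _ => (hqpos z).le) hqsum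
      (fun z _ => hgpos z)

/-- Full LAP lemma for a labeled example: the objective
`J = log (P(x) * P(T|x))` with `P(x) = ∑ z, π z * r z` and `P(T|x) = ∑ z, q z * g z`
is bounded below by the LAP evidence lower bound `J_lap`. -/
theorem lap_elbo_full {Z : Type*} [Fintype Z] [Nonempty Z]
    (π q r g : Z → ℝ)
    (hπpos : ∀ z, 0 < π z) (hπsum : ∑ z, π z = 1)
    (hqpos : ∀ z, 0 < q z) (hqsum : ∑ z, q z = 1)
    (hrpos : ∀ z, 0 < r z) (hgpos : ∀ z, 0 < g z) :
    (∑ z, q z * Real.log (r z)) - (∑ z, q z * Real.log (q z / π z))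
        + (∑ z, q z * Real.log (g z))
      ≤ Real.log ((∑ z, π z * r z) * (∑ z, q z * g z)) :=
  lap_elbo_full_general π q r g hπpos hqpos hqsum hrpos hgpos
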